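/- Let u ∈ 𝒮 be a π-integrable super-harmonic vector, let (i_k)_{k≥0} be an almost-geodesic with respect to π, and suppose K_{·i_k} converges in the product topology to w ∈ ℳ. Then the sequence (π_{i_k} + u_{i_k})_{k≥0} converges and μ_u(w) = lim_{k→∞} (π_{i_k} + u_{i_k}) = lim_{k→∞} μ_u(K_{·i_k}). -/

import Mathlib

open Filter Topology

noncomputable section

namespace MaxPlus

variable {S : Type*}

/-- Weight of the path `p 0, p 1, ..., p n` for the kernel `A`. -/
def pathWeight (A : S → S → EReal) (p : ℕ → S) (n : ℕ) : EReal :=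
  ∑ k ∈ Finset.range n, A (p k) (p (k + 1))

/-- The max-plus star kernel `A*`: supremum of weights of paths of length `≥ 0`. -/
def star (A : S → S → EReal) (i j : S) : EReal :=
  ⨆ (n : ℕ) (p : ℕ → S) (_ : p 0 = i ∧ p n = j), pathWeight A p n

/-- The max-plus kernel `A⁺`: supremum of weights of paths of length `≥ 1`. -/
def plus (A : S → S → EReal) (i j : S) : EReal :=
  ⨆ (n : ℕ) (_ : 1 ≤ n) (p : ℕ → S) (_ : p 0 = i ∧ p n = j), pathWeight A p n

/-- `π` is a left super-harmonic row vector (with full support, being real valued). -/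
def LeftSuperharmonic (A : S → S → EReal) (π : S → ℝ) : Prop :=
  ∀ j, (⨆ i, ((π i : EReal) + A i j)) ≤ (π j : EReal)

/-- The Martin kernel `K_{ij} = A*_{ij} - π_j`. -/
def K (A : S → S → EReal) (π : S → ℝ) (i j : S) : EReal :=
  star A i j - (π j : EReal)

/-- `K♭_{ij} = A⁺_{ij} - π_j`. -/
def Kflat (A : S → S → EReal) (π : S → ℝ) (i j : S) : EReal :=
  plus A i j - (π j : EReal)

/-- The set `𝒦` of columns of the Martin kernel. -/
def kerCols (A : S → S → EReal) (π : S → ℝ) : Set (S → EReal) :=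
  Set.range fun j => fun i => K A π i j

/-- The Martin space `ℳ`: closure of `𝒦` in the product topology. -/
def martin (A : S → S → EReal) (π : S → ℝ) : Set (S → EReal) :=
  closure (kerCols A π)

/-- `μ_u(w)`: the limsup of `π_j + u_j` as `K_{·j} → w`. -/
def mu (A : S → S → EReal) (π : S → ℝ) (u : S → EReal) (w : S → EReal) : EReal :=
  ⨅ (W : Set (S → EReal)) (_ : W ∈ 𝓝 w),
    ⨆ (j : S) (_ : (fun i => K A π i j) ∈ W), ((π j : EReal) + u j)

/-- `w♭_i`: the liminf of `K♭_{ij}` as `K_{·j} → w`. -/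
def flat (A : S → S → EReal) (π : S → ℝ) (w : S → EReal) (i : S) : EReal :=
  ⨆ (W : Set (S → EReal)) (_ : W ∈ 𝓝 w),
    ⨅ (j : S) (_ : (fun i' => K A π i' j) ∈ W), Kflat A π i j

/-- The kernel `H(z,w) = μ_w(z)`. -/
def H (A : S → S → EReal) (π : S → ℝ) (z w : S → EReal) : EReal := mu A π w z

/-- The kernel `H♭(z,w) = μ_{w♭}(z)`. -/
def Hflat (A : S → S → EReal) (π : S → ℝ) (z w : S → EReal) : EReal :=
  mu A π (flat A π w) z

/-- The minimal Martin space `ℳᵐ = {w ∈ ℳ : H♭(w,w) = 0}`. -/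
def martinMin (A : S → S → EReal) (π : S → ℝ) : Set (S → EReal) :=
  {w | w ∈ martin A π ∧ Hflat A π w w = 0}

/-- The maximal circuit mean `ρ(A)`. -/
def maxCircuitMean (A : S → S → EReal) : EReal :=
  ⨆ (k : ℕ) (_ : 1 ≤ k) (p : ℕ → S) (_ : p k = p 0),
    (((k : ℝ)⁻¹ : ℝ) : EReal) * pathWeight A p k

/-- `α`-almost-geodesic with respect to the left super-harmonic vector `π`. -/
def IsAlmostGeodesic (A : S → S → EReal) (π : S → ℝ) (x : ℕ → S) : Prop :=
  ∃ α : ℝ, 0 ≤ α ∧ ∀ k : ℕ,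
    (π (x k) : EReal) ≤ (α : EReal) + (π (x 0) : EReal) + pathWeight A x k

/-- The set `𝒮` of `π`-integrable super-harmonic vectors. -/
def Sset (A : S → S → EReal) (π : S → ℝ) : Set (S → EReal) :=
  {u | (∀ i, u i ≠ ⊤) ∧ (∀ i, (⨆ j, A i j + u j) ≤ u i) ∧
    (⨆ j, ((π j : EReal) + u j)) < ⊤}

/-- The set `ℋ` of `π`-integrable harmonic vectors. -/
def Hset (A : S → S → EReal) (π : S → ℝ) : Set (S → EReal) :=
  {u | (∀ i, u i ≠ ⊤) ∧ (∀ i, (⨆ j, A i j + u j) = u i) ∧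
    (⨆ j, ((π j : EReal) + u j)) < ⊤}

/-- A vector is normalised if `sup_j (π_j + u_j) = 0`. -/
def Normalised (π : S → ℝ) (u : S → EReal) : Prop :=
  (⨆ j, ((π j : EReal) + u j)) = 0

/-- `ξ` is an extremal generator of `V`. -/
def ExtremalGen (V : Set (S → EReal)) (ξ : S → EReal) : Prop :=
  ξ ∈ V ∧ ξ ≠ (fun _ => (⊥ : EReal)) ∧
    ∀ u v, u ∈ V → v ∈ V → ξ = (fun i => u i ⊔ v i) → ξ = u ∨ ξ = v

end MaxPlus

/-!
Let `β k = π (x k) + u (x k)`. Convergence of `K_{·x k}` to `w` alone gives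
`limsup β ≤ μ_u(w)`. Conversely, super-harmonicity of `u` gives `μ_u(z) + z_i ≤ u_i` for every
`z`, so it suffices to bound `w (x k) ≥ -π (x k) - ε k` with `ε k → 0`. Along an almost-geodesic
the real sequence `π (x k) - (weight of x up to k)` is nondecreasing (by super-harmonicity of `π`)
and bounded (by the almost-geodesic inequality), hence converges; `ε k` is its remaining
increase, and the segments of `x` witness `K (x k) (x l) ≥ -π (x k) - ε k` for `l ≥ k`. Taking
`z = K_{·j}` and `i = j` also shows `μ_u(K_{·j}) = π j + u j`, which gives the second limit.
-/

namespace MaxPlus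

section

variable {S : Type*} {A : S → S → EReal} {π : S → ℝ} {u : S → EReal}

lemma le_liminf_of_le_add_of_tendsto_zero {ι : Type*} {l : Filter ι} [l.NeBot] {a : EReal}
    {f : ι → EReal} {ε : ι → ℝ} (hε : Tendsto ε l (𝓝 0)) (h : ∀ k, a ≤ ε k + f k) :
    a ≤ liminf f l := by
  have hε_limsup : limsup (fun k => (ε k : EReal)) l = 0 := (EReal.tendsto_coe.2 hε).limsup_eq
  calc a ≤ liminf (fun k => (ε k : EReal) + f k) l := le_liminf_of_le (by isBoundedDefault)
          (Eventually.of_forall h)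
    _ ≤ limsup (fun k => (ε k : EReal)) l + liminf f l :=
        EReal.liminf_add_le (by simp [hε_limsup]) (by simp [hε_limsup])
    _ = liminf f l := by rw [hε_limsup, zero_add]

lemma pathWeight_add (p : ℕ → S) (k m : ℕ) :
    pathWeight A p (k + m) = pathWeight A p k + pathWeight A (fun t => p (k + t)) m :=
  Finset.sum_range_add _ k m

lemma pathWeight_le_star (p : ℕ → S) (n : ℕ) : pathWeight A p n ≤ star A (p 0) (p n) :=
  le_iSup₂_of_le n p (le_iSup_of_le ⟨rfl, rfl⟩ le_rfl)

lemma star_self_nonneg (i : S) : 0 ≤ star A i i := by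
  simpa [pathWeight] using pathWeight_le_star (A := A) (fun _ => i) 0

lemma LeftSuperharmonic.coe_add_pathWeight_le (hπ : LeftSuperharmonic A π) (p : ℕ → S)
    (n : ℕ) : (π (p 0) : EReal) + pathWeight A p n ≤ π (p n) := by
  induction n with
  | zero => simp [pathWeight]
  | succ n ih =>
    rw [pathWeight, Finset.sum_range_succ, ← pathWeight, ← add_assoc]
    calc _ ≤ (π (p n) : EReal) + A (p n) (p (n + 1)) := add_le_add_left ih _
      _ ≤ π (p (n + 1)) :=
        (le_iSup (fun i => (π i : EReal) + A i (p (n + 1))) (p n)).trans (hπ _)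

lemma pathWeight_add_le_of_superharmonic (hu : ∀ i, (⨆ j, A i j + u j) ≤ u i) (p : ℕ → S)
    (n : ℕ) : pathWeight A p n + u (p n) ≤ u (p 0) := by
  induction n with
  | zero => simp [pathWeight]
  | succ n ih =>
    rw [pathWeight, Finset.sum_range_succ, ← pathWeight, add_assoc]
    calc _ ≤ pathWeight A p n + u (p n) :=
          add_le_add_right ((le_iSup (fun j => A (p n) j + u j) (p (n + 1))).trans (hu _)) _
      _ ≤ u (p 0) := ih

lemma star_add_le_of_superharmonic (hu : ∀ i, (⨆ j, A i j + u j) ≤ u i) (i j : S) :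
    star A i j + u j ≤ u i := by
  refine EReal.add_le_of_forall_lt fun a ha b hb => ?_
  simp only [star, lt_iSup_iff] at ha
  obtain ⟨n, p, ⟨rfl, rfl⟩, ha⟩ := ha
  exact (add_le_add ha.le hb.le).trans (pathWeight_add_le_of_superharmonic hu p n)

lemma mu_add_le (hu : ∀ i j, star A i j + u j ≤ u i) (z : S → EReal) (i : S) :
    mu A π u z + z i ≤ u i := by
  refine EReal.add_le_of_forall_lt fun a ha b hb => ?_
  have hW : {y : S → EReal | b < y i} ∈ 𝓝 z :=
    (isOpen_lt continuous_const (continuous_apply i)).mem_nhds hb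
  obtain ⟨j, hbK, haj⟩ : ∃ j, b < K A π i j ∧ a < π j + u j := by
    simpa only [lt_iSup_iff, exists_prop, Set.mem_ofPred_eq] using ha.trans_le (iInf₂_le _ hW)
  calc a + b ≤ (π j + u j) + K A π i j := add_le_add haj.le hbK.le
    _ = star A i j + u j := by rw [K, add_comm, ← add_assoc, EReal.sub_add_cancel]
    _ ≤ u i := hu i j

lemma mu_le_add_of_neg_le (hu : ∀ i j, star A i j + u j ≤ u i) {z : S → EReal} {i : S} {t : ℝ}
    (h : ((-t : ℝ) : EReal) ≤ z i) : mu A π u z ≤ t + u i := by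
  have h' := (add_le_add_right h _).trans (mu_add_le (π := π) hu z i)
  rw [EReal.coe_neg, ← sub_eq_add_neg, EReal.sub_le_iff_le_add (.inl (EReal.coe_ne_bot _))
    (.inl (EReal.coe_ne_top _))] at h'
  rwa [add_comm]

lemma mu_kerCol_eq (hu : ∀ i j, star A i j + u j ≤ u i) (j : S) :
    mu A π u (fun i => K A π i j) = π j + u j := by
  refine le_antisymm (mu_le_add_of_neg_le hu ?_)
    (le_iInf₂ fun _ hW => le_iSup₂_of_le j (mem_of_mem_nhds hW) le_rfl)
  simpa only [K, zero_sub, EReal.coe_neg] using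
    EReal.sub_le_sub (star_self_nonneg (A := A) j) le_rfl

lemma limsup_le_mu {ι : Type*} {l : Filter ι} {x : ι → S} {w : S → EReal}
    (hconv : Tendsto (fun k => fun i => K A π i (x k)) l (𝓝 w)) :
    limsup (fun k => (π (x k) : EReal) + u (x k)) l ≤ mu A π u w :=
  le_iInf₂ fun _ hW => limsup_le_of_le (by isBoundedDefault)
    (Eventually.mono (hconv hW) fun k hk => le_iSup₂_of_le (x k) hk le_rfl)

lemma IsAlmostGeodesic.exists_le_kerCol (hπ : LeftSuperharmonic A π) {x : ℕ → S}
    (hx : IsAlmostGeodesic A π x) : ∃ ε : ℕ → ℝ, Tendsto ε atTop (𝓝 0) ∧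
      ∀ k m, ((-(ε k + π (x k)) : ℝ) : EReal) ≤ K A π (x k) (x (k + m)) := by
  obtain ⟨α, -, hα⟩ := hx
  have hfin : ∀ k, ∃ r : ℝ, pathWeight A x k = r := fun k => by
    refine ⟨_, (EReal.coe_toReal (fun h => ?_) (fun h => ?_)).symm⟩
    · simpa [h] using hπ.coe_add_pathWeight_le x k
    · simpa [h] using hα k
  choose r hr using hfin
  have hseg : ∀ k m, pathWeight A (fun t => x (k + t)) m = ((r (k + m) - r k : ℝ) : EReal) := by
    intro k m
    have h := pathWeight_add (A := A) x k m
    rw [hr, hr] at h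
    rw [EReal.coe_sub, h, EReal.add_sub_cancel_left]
  set c : ℕ → ℝ := fun k => π (x k) - r k
  have hc_mono : Monotone c := by
    intro k l hkl
    obtain ⟨m, rfl⟩ := Nat.exists_eq_add_of_le hkl
    have h := hπ.coe_add_pathWeight_le (fun t => x (k + t)) m
    rw [hseg, ← EReal.coe_add, EReal.coe_le_coe_iff, Nat.add_zero] at h
    simp only [c]
    linarith
  have hc_bdd : BddAbove (Set.range c) := by
    refine ⟨α + π (x 0), Set.forall_mem_range.2 fun k => ?_⟩
    have h := hα k
    rw [hr, ← EReal.coe_add, ← EReal.coe_add, EReal.coe_le_coe_iff] at h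
    simp only [c]
    linarith
  refine ⟨fun k => (⨆ i, c i) - c k, ?_, fun k m => ?_⟩
  · simpa only [sub_self] using (tendsto_atTop_ciSup hc_mono hc_bdd).const_sub (⨆ i, c i)
  · have hc_le := le_ciSup hc_bdd (k + m)
    calc ((-((⨆ i, c i) - c k + π (x k)) : ℝ) : EReal)
        ≤ ((r (k + m) - r k - π (x (k + m)) : ℝ) : EReal) := by
          rw [EReal.coe_le_coe_iff]
          simp only [c] at hc_le ⊢
          linarith
      _ = pathWeight A (fun t => x (k + t)) m - π (x (k + m)) := by rw [hseg, EReal.coe_sub]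
      _ ≤ K A π (x k) (x (k + m)) := EReal.sub_le_sub (pathWeight_le_star _ _) le_rfl

lemma IsAlmostGeodesic.exists_le_of_tendsto (hπ : LeftSuperharmonic A π) {x : ℕ → S}
    (hx : IsAlmostGeodesic A π x) {w : S → EReal}
    (hconv : Tendsto (fun k => fun i => K A π i (x k)) atTop (𝓝 w)) :
    ∃ ε : ℕ → ℝ, Tendsto ε atTop (𝓝 0) ∧ ∀ k, ((-(ε k + π (x k)) : ℝ) : EReal) ≤ w (x k) := by
  obtain ⟨ε, hε, hK⟩ := hx.exists_le_kerCol hπ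
  refine ⟨ε, hε, fun k => ge_of_tendsto (tendsto_pi_nhds.1 hconv (x k)) ?_⟩
  filter_upwards [eventually_ge_atTop k] with l hl
  obtain ⟨m, rfl⟩ := Nat.exists_eq_add_of_le hl
  exact hK k m

end

theorem mu_continuous_along_almostGeodesic_general {S : Type*} (A : S → S → EReal)
    (π : S → ℝ) (hπ : LeftSuperharmonic A π)
    (u : S → EReal) (hu : u ∈ Sset A π)
    (x : ℕ → S) (hx : IsAlmostGeodesic A π x)
    (w : S → EReal)
    (hconv : Tendsto (fun k => fun i => K A π i (x k)) atTop (𝓝 w)) :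
    Tendsto (fun k => ((π (x k) : EReal) + u (x k))) atTop (𝓝 (mu A π u w)) ∧
    Tendsto (fun k => mu A π u (fun i => K A π i (x k))) atTop (𝓝 (mu A π u w)) := by
  have hstar := star_add_le_of_superharmonic hu.2.1
  obtain ⟨ε, hε, hw⟩ := hx.exists_le_of_tendsto hπ hconv
  have hmu_le : ∀ k, mu A π u w ≤ ε k + (π (x k) + u (x k)) := fun k => by
    simpa only [EReal.coe_add, add_assoc] using mu_le_add_of_neg_le hstar (hw k)
  have hlim : Tendsto (fun k => (π (x k) : EReal) + u (x k)) atTop (𝓝 (mu A π u w)) :=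
    tendsto_of_le_liminf_of_limsup_le (le_liminf_of_le_add_of_tendsto_zero hε hmu_le)
      (limsup_le_mu hconv)
  exact ⟨hlim, hlim.congr fun k => (mu_kerCol_eq hstar (x k)).symm⟩

/-- `μ_u` is continuous along almost-geodesics: if `u ∈ 𝒮`, `(i_k)` is an
almost-geodesic w.r.t. `π` and `K_{·i_k} → w ∈ ℳ`, then `π_{i_k} + u_{i_k}` converges and
`μ_u(w) = lim_k (π_{i_k} + u_{i_k}) = lim_k μ_u(K_{·i_k})`. -/
theorem mu_continuous_along_almostGeodesic {S : Type*} (A : S → S → EReal)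
    (hA : ∀ i j, A i j ≠ ⊤) (π : S → ℝ) (hπ : LeftSuperharmonic A π)
    (u : S → EReal) (hu : u ∈ Sset A π)
    (x : ℕ → S) (hx : IsAlmostGeodesic A π x)
    (w : S → EReal) (hw : w ∈ martin A π)
    (hconv : Tendsto (fun k => fun i => K A π i (x k)) atTop (𝓝 w)) :
    Tendsto (fun k => ((π (x k) : EReal) + u (x k))) atTop (𝓝 (mu A π u w)) ∧
    Tendsto (fun k => mu A π u (fun i => K A π i (x k))) atTop (𝓝 (mu A π u w)) :=
  mu_continuous_along_almostGeodesic_general A π hπ u hu x hx w hconv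

end MaxPlus
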